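/- Let r ≥ 4 and let G be a (K_r \ K_{1,r-2})-free graph containing a clique C with |C| > r². Then for every u ∈ N(C), the graph induced by N(C) \ N[u] is K_{r-2}-free. -/

import Mathlib

/-!
A vertex `z` adjacent to some vertex `w` of the large clique `C` has fewer than `r - 2`
non-neighbours in `C`: otherwise `r - 2` of them together with `w` form an `(r - 1)`-clique
meeting `z` only in `w`, a copy of `K_r \ K_{1,r-2}`. Hence `u` and the `r - 2` vertices of a
clique `s ⊆ N(C) \ N[u]` miss at most `(r - 1)(r - 3) < |C|` vertices of `C` in total, so they
have a common neighbour `c ∈ C`, and `insert c s` with the vertex `u` is again a forbidden copy.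
-/

open Finset

namespace SimpleGraph

variable {V : Type*} (G : SimpleGraph V)

/-- `G` contains `K_{n+1} \ K_{1,n-1}`: an `n`-clique `s` and a vertex `u` outside it that is
adjacent to exactly one vertex `w` of `s`. -/
def HasCliqueWithPendant (n : ℕ) : Prop :=
  ∃ (s : Finset V) (u w : V), G.IsNClique n s ∧ u ∉ s ∧ w ∈ s ∧ G.Adj u w ∧
    ∀ z ∈ s, z ≠ w → ¬ G.Adj u z

variable {G} [DecidableRel G.Adj]

theorem card_nonAdj_lt_of_not_hasCliqueWithPendant {k : ℕ}
    (hG : ¬ G.HasCliqueWithPendant (k + 1)) {C : Finset V} (hC : G.IsClique (C : Set V))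
    {z w : V} (hz : z ∉ C) (hw : w ∈ C) (hzw : G.Adj z w) :
    #{c ∈ C | ¬ G.Adj z c} < k := by
  classical
  by_contra! hk
  obtain ⟨T, hTsub, hTcard⟩ := exists_subset_card_eq hk
  have hTC : T ⊆ C := hTsub.trans (filter_subset _ _)
  have hwT : w ∉ T := fun h => (mem_filter.mp (hTsub h)).2 hzw
  have hT : G.IsNClique k T := ⟨hC.subset (by simpa using hTC), hTcard⟩
  refine hG ⟨insert w T, z, w, hT.insert fun b hb => hC hw (by simpa using hTC hb) ?_,
    ?_, mem_insert_self _ _, hzw, ?_⟩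
  · rintro rfl; exact hwT hb
  · rw [mem_insert, not_or]; exact ⟨hzw.ne, fun h => hz (hTC h)⟩
  · intro y hy hyw
    exact (mem_filter.mp (hTsub ((mem_insert.mp hy).resolve_left hyw))).2

theorem exists_common_adj_of_card_mul_lt {C t : Finset V} {m : ℕ}
    (ht : ∀ z ∈ t, #{c ∈ C | ¬ G.Adj z c} ≤ m) (hcard : #t * m < #C) :
    ∃ c ∈ C, ∀ z ∈ t, G.Adj z c := by
  classical
  have hmiss : {c ∈ C | ¬ ∀ z ∈ t, G.Adj z c} ⊆ t.biUnion fun z => {c ∈ C | ¬ G.Adj z c} := by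
    intro c hc
    simp only [mem_filter, not_forall] at hc
    obtain ⟨hcC, z, hzt, hzc⟩ := hc
    exact mem_biUnion.mpr ⟨z, hzt, mem_filter.mpr ⟨hcC, hzc⟩⟩
  have hlt : #{c ∈ C | ¬ ∀ z ∈ t, G.Adj z c} < #C :=
    ((card_le_card hmiss).trans (card_biUnion_le_card_mul _ _ _ ht)).trans_lt hcard
  obtain ⟨c, hcC, hc⟩ := exists_mem_notMem_of_card_lt_card hlt
  simp only [mem_filter, not_and, not_not] at hc
  exact ⟨c, hcC, hc hcC⟩

theorem not_isNClique_of_not_hasCliqueWithPendant {k : ℕ}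
    (hG : ¬ G.HasCliqueWithPendant (k + 1)) {C : Finset V} (hC : G.IsClique (C : Set V))
    (hcard : (k + 1) * (k - 1) < #C) {u : V} (huC : u ∉ C) (hu : ∃ w ∈ C, G.Adj u w)
    {s : Finset V} (hs : ∀ z ∈ s, (z ∉ C ∧ ∃ w ∈ C, G.Adj z w) ∧ z ≠ u ∧ ¬ G.Adj u z) :
    ¬ G.IsNClique k s := by
  classical
  intro hclq
  have huS : u ∉ s := fun h => (hs u h).2.1 rfl
  have hnonAdj : ∀ z ∈ insert u s, #{c ∈ C | ¬ G.Adj z c} ≤ k - 1 := by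
    intro z hz
    obtain ⟨hzC, w, hw, hzw⟩ : z ∉ C ∧ ∃ w ∈ C, G.Adj z w := by
      rcases mem_insert.mp hz with rfl | hz
      exacts [⟨huC, hu⟩, (hs z hz).1]
    have := card_nonAdj_lt_of_not_hasCliqueWithPendant hG hC hzC hw hzw
    omega
  obtain ⟨c, hcC, hc⟩ := exists_common_adj_of_card_mul_lt hnonAdj
    (by rwa [card_insert_of_notMem huS, hclq.card_eq])
  refine hG ⟨insert c s, u, c, hclq.insert fun b hb => (hc b (mem_insert_of_mem hb)).symm,
    ?_, mem_insert_self _ _, hc u (mem_insert_self _ _), ?_⟩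
  · rw [mem_insert, not_or]
    exact ⟨fun h => huC (h ▸ hcC), huS⟩
  · intro z hz hzc
    exact (hs z ((mem_insert.mp hz).resolve_left hzc)).2.2

end SimpleGraph

theorem stmt7_general {V : Type} (r : ℕ) (hr : 4 ≤ r)
    (G : SimpleGraph V)
    (hfree : ¬ ∃ (s : Finset V) (u w : V), G.IsNClique (r - 1) s ∧ u ∉ s ∧ w ∈ s ∧
      G.Adj u w ∧ ∀ z ∈ s, z ≠ w → ¬ G.Adj u z)
    (C : Finset V) (hC : G.IsClique ↑C) (hcard : r ^ 2 < C.card) :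
    ∀ u : V, (u ∉ C ∧ ∃ w ∈ C, G.Adj u w) →
      ∀ s : Finset V,
        (∀ z ∈ s, (z ∉ C ∧ ∃ w ∈ C, G.Adj z w) ∧ z ≠ u ∧ ¬ G.Adj u z) →
        ¬ G.IsNClique (r - 2) s := by
  classical
  intro u hu s hs
  obtain ⟨k, rfl⟩ : ∃ k, r = k + 2 := ⟨r - 2, by omega⟩
  have hcard' : (k + 1) * (k - 1) < #C :=
    lt_of_le_of_lt (sq (k + 2) ▸ Nat.mul_le_mul (by omega) (by omega)) hcard
  exact SimpleGraph.not_isNClique_of_not_hasCliqueWithPendant hfree hC hcard' hu.1 hu.2 hs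

/-- In a `(K_r \ K_{1,r-2})`-free graph (`r ≥ 4`) with a clique `C` of size `> r²`, for every
`u ∈ N(C)` the graph induced by `N(C) \ N[u]` is `K_{r-2}`-free. -/
theorem stmt7 {V : Type} [Fintype V] [DecidableEq V] (r : ℕ) (hr : 4 ≤ r)
    (G : SimpleGraph V)
    (hfree : ¬ ∃ (s : Finset V) (u w : V), G.IsNClique (r - 1) s ∧ u ∉ s ∧ w ∈ s ∧
      G.Adj u w ∧ ∀ z ∈ s, z ≠ w → ¬ G.Adj u z)
    (C : Finset V) (hC : G.IsClique ↑C) (hcard : r ^ 2 < C.card) :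
    ∀ u : V, (u ∉ C ∧ ∃ w ∈ C, G.Adj u w) →
      ∀ s : Finset V,
        (∀ z ∈ s, (z ∉ C ∧ ∃ w ∈ C, G.Adj z w) ∧ z ≠ u ∧ ¬ G.Adj u z) →
        ¬ G.IsNClique (r - 2) s :=
  stmt7_general r hr G hfree C hC hcard
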